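/- arXiv:1708.01545 — 4 statements merged into one kernel-verified Lean document; each statement's English description precedes it below -/
import Mathlib

section
/- Let X be a complex linear space, H a complex Hilbert space, and R : X → H a linear map. An antilinear functional x' ∈ X' lies in the range of R* (the restriction of the dual operator R' to H ⊆ H') if and only if (i) ⟨x', x⟩ = 0 for all x ∈ ker R, and (ii) the supremum over x ∈ X of |⟨x', x⟩|²/‖Rx‖² is finite (with the convention 0/0 = 0). -/
open scoped ComplexOrder ComplexConjugate
open Complex

noncomputable section

/-- For a linear map `R : V → H` into a Hilbert space, `adjMap R : H → V'` is the
operator `R*`, sending `h` to the antilinear functional `v ↦ (h | R v)`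
(in Mathlib's convention, `v ↦ ⟪R v, h⟫`). -/
def adjMap {V H : Type*} [AddCommGroup V] [Module ℂ V]
    [NormedAddCommGroup H] [InnerProductSpace ℂ H] (R : V →ₗ[ℂ] H) :
    H →ₗ[ℂ] (V →ₗ⋆[ℂ] ℂ) where
  toFun h :=
    { toFun := fun v => @inner ℂ _ _ (R v) h
      map_add' := fun v w => by simp [inner_add_left]
      map_smul' := fun c v => by simp [inner_smul_left]; ring }
  map_add' h₁ h₂ := by ext v; simp [inner_add_right]
  map_smul' c h := by ext v; simp [inner_smul_right]

/-- For `B : Y → X'`, the operator `B~ := B'↾X : X → Y'`, `(B~ x) y = conj (⟨B y, x⟩)`. -/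
def Btilde {X Y : Type*} [AddCommGroup X] [Module ℂ X] [AddCommGroup Y] [Module ℂ Y]
    (B : Y →ₗ[ℂ] (X →ₗ⋆[ℂ] ℂ)) : X →ₗ[ℂ] (Y →ₗ⋆[ℂ] ℂ) where
  toFun x :=
    { toFun := fun y => conj (B y x)
      map_add' := fun y₁ y₂ => by simp
      map_smul' := fun c y => by simp }
  map_add' x₁ x₂ := by ext y; simp
  map_smul' c x := by ext y; simp

/-!
By Cauchy–Schwarz, `|(h | R x)| ≤ ‖h‖ ‖R x‖`. Conversely, the two conditions together say exactly
that `|⟨x', x⟩| ≤ c ‖R x‖` for some `c`; then `conj ∘ x'` factors through a bounded functional on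
`range R`, which Hahn–Banach extends to all of `H` and Riesz represents by a vector `h` with
`R* h = x'`.
-/

theorem bddAbove_norm_sq_div_norm_sq_iff {α E F : Type*} [NormedAddCommGroup E]
    [NormedAddCommGroup F] (f : α → E) (g : α → F) :
    ((∀ a, g a = 0 → f a = 0) ∧ BddAbove (Set.range fun a => ‖f a‖ ^ 2 / ‖g a‖ ^ 2)) ↔
      ∃ c, ∀ a, ‖f a‖ ≤ c * ‖g a‖ := by
  constructor
  · rintro ⟨hker, C, hC⟩
    refine ⟨√C, fun a => ?_⟩
    rcases eq_or_ne (g a) 0 with hga | hga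
    · simp [hker a hga, hga]
    · have hpos : 0 < ‖g a‖ ^ 2 := by positivity
      have hsq : ‖f a‖ ^ 2 ≤ C * ‖g a‖ ^ 2 := (div_le_iff₀ hpos).mp (hC ⟨a, rfl⟩)
      calc ‖f a‖ = √(‖f a‖ ^ 2) := (Real.sqrt_sq (norm_nonneg _)).symm
        _ ≤ √(C * ‖g a‖ ^ 2) := Real.sqrt_le_sqrt hsq
        _ = √C * ‖g a‖ := by rw [Real.sqrt_mul' _ (sq_nonneg _), Real.sqrt_sq (norm_nonneg _)]
  · rintro ⟨c, hc⟩
    refine ⟨fun a hga => norm_le_zero_iff.mp (by simpa [hga] using hc a), c ^ 2, ?_⟩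
    rintro _ ⟨a, rfl⟩
    rcases eq_or_ne (g a) 0 with hga | hga
    · simp [hga, sq_nonneg]
    · rw [div_le_iff₀ (by positivity), ← mul_pow]
      exact pow_le_pow_left₀ (norm_nonneg _) (hc a) 2

theorem LinearMap.exists_strongDual_comp_eq_of_norm_le {𝕜 X F : Type*} [RCLike 𝕜]
    [AddCommGroup X] [Module 𝕜 X] [SeminormedAddCommGroup F] [NormedSpace 𝕜 F]
    (R : X →ₗ[𝕜] F) (ℓ : X →ₗ[𝕜] 𝕜) {c : ℝ} (hc : ∀ x, ‖ℓ x‖ ≤ c * ‖R x‖) :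
    ∃ G : StrongDual 𝕜 F, ∀ x, G (R x) = ℓ x := by
  have hker : LinearMap.ker R ≤ LinearMap.ker ℓ := fun x hx =>
    norm_le_zero_iff.mp (by simpa [LinearMap.mem_ker.mp hx] using hc x)
  let g : LinearMap.range R →ₗ[𝕜] 𝕜 :=
    (R.ker.liftQ ℓ hker).comp R.quotKerEquivRange.symm.toLinearMap
  have hg : ∀ x, g ⟨R x, x, rfl⟩ = ℓ x := fun x => by
    simp [g, R.quotKerEquivRange_symm_apply_image x ⟨x, rfl⟩]
  have hgc : ∀ y, ‖g y‖ ≤ c * ‖y‖ := by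
    rintro ⟨_, x, rfl⟩
    simpa [hg x] using hc x
  obtain ⟨G, hG, -⟩ := exists_extension_norm_eq _ (g.mkContinuous c hgc)
  exact ⟨G, fun x => (hG ⟨R x, x, rfl⟩).trans (hg x)⟩

section adjMap

variable {V H : Type*} [AddCommGroup V] [Module ℂ V] [NormedAddCommGroup H]
  [InnerProductSpace ℂ H] (R : V →ₗ[ℂ] H)

theorem adjMap_apply (h : H) (v : V) : adjMap R h v = inner ℂ (R v) h := rfl

theorem mem_range_adjMap_iff [CompleteSpace H] (x' : V →ₗ⋆[ℂ] ℂ) :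
    x' ∈ Set.range (adjMap R) ↔ ∃ c, ∀ v, ‖x' v‖ ≤ c * ‖R v‖ := by
  constructor
  · rintro ⟨h, rfl⟩
    exact ⟨‖h‖, fun v => by
      rw [adjMap_apply, mul_comm]; exact norm_inner_le_norm (𝕜 := ℂ) (R v) h⟩
  · rintro ⟨c, hc⟩
    let ℓ : V →ₗ[ℂ] ℂ := (starLinearEquiv ℂ).toLinearMap ∘ₛₗ x'
    obtain ⟨G, hG⟩ := R.exists_strongDual_comp_eq_of_norm_le ℓ (c := c)
      (fun v => by simpa [ℓ] using hc v)
    refine ⟨(InnerProductSpace.toDual ℂ H).symm G, LinearMap.ext fun v => ?_⟩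
    rw [adjMap_apply, ← inner_conj_symm, InnerProductSpace.toDual_symm_apply, hG]
    simp [ℓ]

end adjMap

theorem schur_stmt0 {X H : Type} [AddCommGroup X] [Module ℂ X]
    [NormedAddCommGroup H] [InnerProductSpace ℂ H] [CompleteSpace H]
    (R : X →ₗ[ℂ] H) (x' : X →ₗ⋆[ℂ] ℂ) :
    x' ∈ Set.range (adjMap R) ↔
      (∀ x, R x = 0 → x' x = 0) ∧
        BddAbove (Set.range fun x => ‖x' x‖ ^ 2 / ‖R x‖ ^ 2) := by
  rw [mem_range_adjMap_iff, bddAbove_norm_sq_div_norm_sq_iff]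
end
end

section
/- Let A, D : X → X' be non-negative with square roots (R_A, H_A), (R_D, H_D). (i) If A ≤ α²D for some α ≥ 0, then ran R_A* ⊆ ran R_D*. (ii) If β²D ≤ A ≤ α²D for some α, β > 0, then ran R_A* = ran R_D*. (iii) If (S_A, G_A) is another square root of A, then ran R_A* = ran S_A* (the range of the adjoint of a square root depends only on A). -/
open scoped ComplexOrder ComplexConjugate
open Complex

noncomputable section

/-! The argument is Douglas' factorization lemma. If `R` and `S` are square roots of `A` and `D`,
then `A ≤ α²D` reads `‖R x‖ ≤ α ‖S x‖`, so `S x ↦ R x` is a well-defined operator of norm at most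
`α` on the range of `S`. Composed with `⟪h, ·⟫` it is a bounded functional on `ran S`; a Hahn–Banach
extension to all of `H_D`, represented by a vector `k` (Riesz), gives `R* h = S* k`. Part (ii) is
(i) applied in both directions, and (iii) is the case `D = A`, `α = 1`. -/

lemma LinearMap.exists_comp_rangeRestrict_eq_of_norm_le {𝕜 X H K : Type*} [NormedField 𝕜]
    [AddCommGroup X] [Module 𝕜 X] [NormedAddCommGroup H] [NormedSpace 𝕜 H]
    [SeminormedAddCommGroup K] [NormedSpace 𝕜 K] (R : X →ₗ[𝕜] H) (S : X →ₗ[𝕜] K) {c : ℝ}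
    (hle : ∀ x, ‖R x‖ ≤ c * ‖S x‖) :
    ∃ T : LinearMap.range S →L[𝕜] H, ∀ x, T (S.rangeRestrict x) = R x := by
  obtain ⟨g, hg⟩ := S.rangeRestrict.exists_rightInverse_of_surjective S.range_rangeRestrict
  have hSg : ∀ y, S (g y) = y := fun y => congrArg Subtype.val (LinearMap.congr_fun hg y)
  refine ⟨(R ∘ₗ g).mkContinuous c fun y => by simpa [hSg] using hle (g y), fun x => ?_⟩
  have hker : ‖R (g (S.rangeRestrict x) - x)‖ ≤ 0 := by
    simpa [hSg] using hle (g (S.rangeRestrict x) - x)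
  simpa [sub_eq_zero] using norm_le_zero_iff.1 hker

open scoped InnerProductSpace

section SquareRoot

variable {X H K : Type*} [AddCommGroup X] [Module ℂ X]
  [NormedAddCommGroup H] [InnerProductSpace ℂ H] [NormedAddCommGroup K] [InnerProductSpace ℂ K]

lemma adjMap_apply_s4 (R : X →ₗ[ℂ] H) (h : H) (x : X) : adjMap R h x = ⟪R x, h⟫_ℂ := rfl

lemma range_adjMap_subset_of_norm_le [CompleteSpace K] (R : X →ₗ[ℂ] H) (S : X →ₗ[ℂ] K) {c : ℝ}
    (hle : ∀ x, ‖R x‖ ≤ c * ‖S x‖) : Set.range (adjMap R) ⊆ Set.range (adjMap S) := by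
  rintro _ ⟨h, rfl⟩
  obtain ⟨T, hT⟩ := R.exists_comp_rangeRestrict_eq_of_norm_le S hle
  obtain ⟨f, hf, -⟩ := exists_extension_norm_eq (LinearMap.range S) ((innerSL ℂ h).comp T)
  refine ⟨(InnerProductSpace.toDual ℂ K).symm f, LinearMap.ext fun x => ?_⟩
  have hfS : f (S x) = ⟪h, R x⟫_ℂ := by simpa [hT] using hf (S.rangeRestrict x)
  rw [adjMap_apply_s4, adjMap_apply_s4, ← inner_conj_symm, InnerProductSpace.toDual_symm_apply, hfS,
    inner_conj_symm]

lemma apply_self_eq_norm_sq {A : X →ₗ[ℂ] (X →ₗ⋆[ℂ] ℂ)} {R : X →ₗ[ℂ] H}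
    (hR : ∀ x, A x = adjMap R (R x)) (x : X) : A x x = ((‖R x‖ ^ 2 : ℝ) : ℂ) := by
  rw [hR, adjMap_apply_s4, inner_self_eq_norm_sq_to_K]
  norm_cast

lemma norm_le_of_apply_self_le {A D : X →ₗ[ℂ] (X →ₗ⋆[ℂ] ℂ)} {R : X →ₗ[ℂ] H} {S : X →ₗ[ℂ] K}
    (hR : ∀ x, A x = adjMap R (R x)) (hS : ∀ x, D x = adjMap S (S x)) {α : ℝ} (hα : 0 ≤ α)
    (hle : ∀ x, A x x ≤ (α : ℂ) ^ 2 * D x x) (x : X) : ‖R x‖ ≤ α * ‖S x‖ := by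
  have hsq : ‖R x‖ ^ 2 ≤ (α * ‖S x‖) ^ 2 := by
    have := hle x
    rw [apply_self_eq_norm_sq hR, apply_self_eq_norm_sq hS] at this
    rw [mul_pow]
    exact_mod_cast this
  exact (sq_le_sq₀ (norm_nonneg _) (by positivity)).1 hsq

theorem range_adjMap_subset_of_le {A D : X →ₗ[ℂ] (X →ₗ⋆[ℂ] ℂ)} {R : X →ₗ[ℂ] H} {S : X →ₗ[ℂ] K}
    [CompleteSpace K] (hR : ∀ x, A x = adjMap R (R x)) (hS : ∀ x, D x = adjMap S (S x)) {α : ℝ}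
    (hα : 0 ≤ α) (hle : ∀ x, A x x ≤ (α : ℂ) ^ 2 * D x x) :
    Set.range (adjMap R) ⊆ Set.range (adjMap S) :=
  range_adjMap_subset_of_norm_le R S (norm_le_of_apply_self_le hR hS hα hle)

end SquareRoot

theorem schur_stmt4_general {X HA HD GA : Type} [AddCommGroup X] [Module ℂ X]
    [NormedAddCommGroup HA] [InnerProductSpace ℂ HA] [CompleteSpace HA]
    [NormedAddCommGroup HD] [InnerProductSpace ℂ HD] [CompleteSpace HD]
    [NormedAddCommGroup GA] [InnerProductSpace ℂ GA] [CompleteSpace GA]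
    (A D : X →ₗ[ℂ] (X →ₗ⋆[ℂ] ℂ))
    (RA : X →ₗ[ℂ] HA) (RD : X →ₗ[ℂ] HD) (SA : X →ₗ[ℂ] GA)
    (hRA : ∀ x, A x = adjMap RA (RA x)) (hRD : ∀ x, D x = adjMap RD (RD x))
    (hSA : ∀ x, A x = adjMap SA (SA x)) :
    ((∃ α : ℝ, 0 ≤ α ∧ ∀ x, A x x ≤ (α : ℂ) ^ 2 * D x x) →
        Set.range (adjMap RA) ⊆ Set.range (adjMap RD)) ∧
      ((∃ α β : ℝ, 0 < α ∧ 0 < β ∧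
          ∀ x, (β : ℂ) ^ 2 * D x x ≤ A x x ∧ A x x ≤ (α : ℂ) ^ 2 * D x x) →
        Set.range (adjMap RA) = Set.range (adjMap RD)) ∧
      Set.range (adjMap RA) = Set.range (adjMap SA) := by
  have hAA : ∀ x, A x x ≤ ((1 : ℝ) : ℂ) ^ 2 * A x x := by simp
  refine ⟨fun ⟨α, hα, hle⟩ => range_adjMap_subset_of_le hRA hRD hα hle,
    fun ⟨α, β, hα, hβ, hle⟩ => ?_,
    (range_adjMap_subset_of_le hRA hSA zero_le_one hAA).antisymm
      (range_adjMap_subset_of_le hSA hRA zero_le_one hAA)⟩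
  have hDA : ∀ x, D x x ≤ ((β⁻¹ : ℝ) : ℂ) ^ 2 * A x x := fun x =>
    calc D x x = ((β⁻¹ : ℝ) : ℂ) ^ 2 * ((β : ℂ) ^ 2 * D x x) := by
          rw [← mul_assoc, ← mul_pow, ← Complex.ofReal_mul, inv_mul_cancel₀ hβ.ne']
          simp
      _ ≤ ((β⁻¹ : ℝ) : ℂ) ^ 2 * A x x :=
          mul_le_mul_of_nonneg_left (hle x).1 (by norm_cast; positivity)
  exact (range_adjMap_subset_of_le hRA hRD hα.le fun x => (hle x).2).antisymm
    (range_adjMap_subset_of_le hRD hRA (inv_nonneg.2 hβ.le) hDA)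

theorem schur_stmt4 {X HA HD GA : Type} [AddCommGroup X] [Module ℂ X]
    [NormedAddCommGroup HA] [InnerProductSpace ℂ HA] [CompleteSpace HA]
    [NormedAddCommGroup HD] [InnerProductSpace ℂ HD] [CompleteSpace HD]
    [NormedAddCommGroup GA] [InnerProductSpace ℂ GA] [CompleteSpace GA]
    (A D : X →ₗ[ℂ] (X →ₗ⋆[ℂ] ℂ))
    (RA : X →ₗ[ℂ] HA) (RD : X →ₗ[ℂ] HD) (SA : X →ₗ[ℂ] GA)
    (hA : ∀ x, 0 ≤ A x x) (hD : ∀ x, 0 ≤ D x x)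
    (hRA : ∀ x, A x = adjMap RA (RA x)) (hRD : ∀ x, D x = adjMap RD (RD x))
    (hSA : ∀ x, A x = adjMap SA (SA x)) :
    ((∃ α : ℝ, 0 ≤ α ∧ ∀ x, A x x ≤ (α : ℂ) ^ 2 * D x x) →
        Set.range (adjMap RA) ⊆ Set.range (adjMap RD)) ∧
      ((∃ α β : ℝ, 0 < α ∧ 0 < β ∧
          ∀ x, (β : ℂ) ^ 2 * D x x ≤ A x x ∧ A x x ≤ (α : ℂ) ^ 2 * D x x) →
        Set.range (adjMap RA) = Set.range (adjMap RD)) ∧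
      Set.range (adjMap RA) = Set.range (adjMap SA) :=
  schur_stmt4_general A D RA RD SA hRA hRD hSA
end
end

section
/- Let 𝐀 be a non-negative operator on X × Y with square root (R, H). Let L be the orthogonal complement of the closure of R(X × {0}) in H and P the orthogonal projection onto L. Then 𝒮(𝐀) = R* P R. -/
open scoped ComplexOrder ComplexConjugate
open Complex

noncomputable section

/-!
By Pythagoras, `‖R w - R (z, 0)‖² = ‖P (R w)‖² + ‖(1 - P) (R w) - R (z, 0)‖²`, and the vectors
`R (z, 0)` are dense in `Lᗮ`, so the infimum defining `⟨𝒮(𝐀) w, w⟩` is `‖P (R w)‖² = ⟨R* P R w, w⟩`.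
Hermitian symmetry makes `⟨𝒮(𝐀) w, w⟩` real, and over `ℂ` a sesquilinear form is determined by
its diagonal (polarization), so `𝒮(𝐀) = R* P R`.
-/

section Polarization

variable {V : Type*} [AddCommGroup V] [Module ℂ V]

theorem sesqForm_polarization (B : V →ₗ[ℂ] V →ₗ⋆[ℂ] ℂ) (v w : V) :
    4 * B v w = B (v + w) (v + w) - B (v - w) (v - w)
      + I * B (v + I • w) (v + I • w) - I * B (v - I • w) (v - I • w) := by
  simp only [map_add, map_sub, map_smul, LinearMap.add_apply, LinearMap.sub_apply,
    LinearMap.smul_apply, LinearMap.map_smulₛₗ, smul_eq_mul, conj_I]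
  ring_nf
  simp only [I_sq]
  ring

theorem sesqForm_ext_of_apply_self {B B' : V →ₗ[ℂ] V →ₗ⋆[ℂ] ℂ} (h : ∀ v, B v v = B' v v) :
    B = B' := by
  ext v w
  have h4 : (4 : ℂ) * B v w = 4 * B' v w := by
    simp only [sesqForm_polarization, h]
  exact mul_left_cancel₀ four_ne_zero h4

end Polarization

theorem isGLB_range_norm_sub_sq {𝕜 E H : Type*} [RCLike 𝕜] [NormedAddCommGroup H]
    [InnerProductSpace 𝕜 H] [AddCommGroup E] [Module 𝕜 E] (T : E →ₗ[𝕜] H)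
    [(LinearMap.range T).topologicalClosure.HasOrthogonalProjection] (u : H) :
    IsGLB (Set.range fun z => ‖u - T z‖ ^ 2)
      (‖u - (LinearMap.range T).topologicalClosure.starProjection u‖ ^ 2) := by
  set K := (LinearMap.range T).topologicalClosure
  refine isGLB_of_mem_closure ?_ ?_
  · rintro _ ⟨z, rfl⟩
    have hz : T z ∈ K := (LinearMap.range T).le_topologicalClosure (LinearMap.mem_range_self T z)
    have hmin : ‖u - K.starProjection u‖ ≤ ‖u - T z‖ := by
      rw [Submodule.starProjection_minimal]
      exact ciInf_le ⟨0, Set.forall_mem_range.2 fun _ => norm_nonneg _⟩ (⟨T z, hz⟩ : K)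
    exact pow_le_pow_left₀ (norm_nonneg _) hmin 2
  · have hP : K.starProjection u ∈ closure (Set.range T) := by
      rw [← LinearMap.coe_range, ← Submodule.topologicalClosure_coe]
      exact K.starProjection_apply_mem u
    rw [Set.range_comp' (fun h => ‖u - h‖ ^ 2) T]
    exact image_closure_subset_closure_image (by fun_prop) ⟨_, hP, rfl⟩

section adjMap

variable {V H : Type*} [AddCommGroup V] [Module ℂ V] [NormedAddCommGroup H]
  [InnerProductSpace ℂ H] (R : V →ₗ[ℂ] H)

theorem re_adjMap_apply_self (v : V) : (adjMap R (R v) v).re = ‖R v‖ ^ 2 :=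
  inner_self_eq_norm_sq (𝕜 := ℂ) (R v)

end adjMap

theorem schur_stmt11 {X Y H : Type} [AddCommGroup X] [Module ℂ X]
    [AddCommGroup Y] [Module ℂ Y]
    [NormedAddCommGroup H] [InnerProductSpace ℂ H] [CompleteSpace H]
    (R : (X × Y) →ₗ[ℂ] H)
    (S : (X × Y) →ₗ[ℂ] ((X × Y) →ₗ⋆[ℂ] ℂ))
    (hSh : ∀ w₁ w₂, S w₁ w₂ = conj (S w₂ w₁))
    (hS : ∀ w : X × Y,
      IsGLB (Set.range fun z : X =>
          ((adjMap R (R (w - (z, 0)))) (w - (z, 0))).re) ((S w w).re)) :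
    ∀ w w' : X × Y,
      S w w' = @inner ℂ _ _ (R w')
        (R w - (Submodule.orthogonalProjection
          ((Submodule.map R (LinearMap.range (LinearMap.inl ℂ X Y))).topologicalClosure)
          (R w) : H)) := by
  set K := (Submodule.map R (LinearMap.range (LinearMap.inl ℂ X Y))).topologicalClosure
  let g : X × Y →ₗ[ℂ] H := Kᗮ.starProjection.toLinearMap ∘ₗ R
  have hre : ∀ v, (S v v).re = ‖g v‖ ^ 2 := fun v => (hS v).unique <| by
    simp only [re_adjMap_apply_self]
    simp only [map_sub, g, LinearMap.comp_apply, ContinuousLinearMap.coe_coe,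
      Submodule.starProjection_orthogonal_val]
    simpa only [LinearMap.range_comp, LinearMap.comp_apply, LinearMap.inl_apply] using
      isGLB_range_norm_sub_sq (R ∘ₗ LinearMap.inl ℂ X Y) (R v)
  have hdiag : ∀ v, S v v = (adjMap g ∘ₗ g) v v := fun v => by
    have him : (S v v).im = 0 := Complex.conj_eq_iff_im.1 (hSh v v).symm
    rw [LinearMap.comp_apply, adjMap_apply, inner_self_eq_norm_sq_to_K]
    apply Complex.ext <;> simp [hre, him, ← Complex.ofReal_pow]
  intro w w'
  rw [sesqForm_ext_of_apply_self hdiag, LinearMap.comp_apply, adjMap_apply,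
    ← Submodule.starProjection_apply, ← Submodule.starProjection_orthogonal_val]
  simp only [g, LinearMap.comp_apply, ContinuousLinearMap.coe_coe]
  rw [Submodule.inner_starProjection_left_eq_right,
    Submodule.starProjection_eq_self_iff.2 (Kᗮ.starProjection_apply_mem _)]
end
end

section
/- (Crabtree–Haynsworth quotient formula.) Let 𝐃 be a non-negative 3×3 block operator on X × Y × Z with blocks (A, B, B_X; B~, D, B_Y; B_X~, B_Y~, D₁), and let 𝐀 = [[A, B],[B~, D]]. Then the Schur complement 𝐀/A is the upper-left corner of 𝐃/A, and (𝐃/A)/(𝐀/A) = 𝐃/𝐀. -/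
open scoped ComplexOrder ComplexConjugate
open Complex

noncomputable section

/-!
Factor `𝐀 = P* P` with the upper triangular `P = [[R, T_B], [0, S]] : X × Y → H ⊕₂ G`; this is
the content of `hR`, `hTB`, `hS`. Then `‖Q v‖ = ‖P v‖`, so `Q v ↦ P v` extends to an isometry
from `closure (range Q)` onto `closure (range P)`, and it sends `T₃ z` to `(E z, T₂ z)`, because
both have the same pairing `Q* T₃ z = P* (E z, T₂ z)` (this is `hT₃` and `hT₂`). Comparing inner
products gives `⟪T₃ z', T₃ z⟫ = ⟪E z', E z⟫ + ⟪T₂ z', T₂ z⟫`, the quotient formula. The isometry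
is never built: equality of norms follows since `‖t - Q v‖² - ‖s - P v‖²` is constant and both
terms get arbitrarily small, and inner products follow by polarization. The first claim is
`F (y, 0) = T_B y`, as `R*` is injective on `closure (range R)`.
-/

open scoped InnerProductSpace
open Set

@[simp]
lemma adjMap_apply_s13 {V H : Type*} [AddCommGroup V] [Module ℂ V]
    [NormedAddCommGroup H] [InnerProductSpace ℂ H] (R : V →ₗ[ℂ] H) (h : H) (v : V) :
    adjMap R h v = ⟪R v, h⟫_ℂ := rfl

@[simp]
lemma Btilde_apply {X Y : Type*} [AddCommGroup X] [Module ℂ X] [AddCommGroup Y] [Module ℂ Y]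
    (B : Y →ₗ[ℂ] (X →ₗ⋆[ℂ] ℂ)) (x : X) (y : Y) : Btilde B x y = conj (B y x) := rfl

lemma LinearMap.mem_topologicalClosure_range_iff {R M N : Type*} [Semiring R] [AddCommMonoid M]
    [Module R M] [AddCommMonoid N] [Module R N] [TopologicalSpace N] [ContinuousAdd N]
    [ContinuousConstSMul R N] {L : M →ₗ[R] N} {t : N} :
    t ∈ (LinearMap.range L).topologicalClosure ↔ t ∈ closure (range L) := by
  rw [← SetLike.mem_coe, Submodule.topologicalClosure_coe, LinearMap.coe_range]

lemma nonpos_of_forall_le_norm_sub_sq {ι E : Type*} [SeminormedAddCommGroup E] {f : ι → E}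
    {u : E} (hu : u ∈ closure (range f)) {a : ℝ} (h : ∀ i, a ≤ ‖u - f i‖ ^ 2) : a ≤ 0 := by
  have hsub : closure (range f) ⊆ {k | a ≤ ‖u - k‖ ^ 2} :=
    closure_minimal (range_subset_iff.2 h) (isClosed_le continuous_const (by fun_prop))
  simpa using hsub hu

section AdjMap

variable {V K W : Type*} [AddCommGroup V] [Module ℂ V]
  [NormedAddCommGroup K] [InnerProductSpace ℂ K] [NormedAddCommGroup W] [InnerProductSpace ℂ W]

lemma eq_of_adjMap_eq {L : V →ₗ[ℂ] K} {t₁ t₂ : K} (h₁ : t₁ ∈ closure (range L))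
    (h₂ : t₂ ∈ closure (range L)) (h : adjMap L t₁ = adjMap L t₂) : t₁ = t₂ := by
  set M := (LinearMap.range L).topologicalClosure
  have hmem : t₁ - t₂ ∈ M := sub_mem (LinearMap.mem_topologicalClosure_range_iff.2 h₁)
    (LinearMap.mem_topologicalClosure_range_iff.2 h₂)
  have hperp : t₁ - t₂ ∈ Mᗮ := by
    rw [Submodule.orthogonal_closure]
    rintro _ ⟨v, rfl⟩
    rw [inner_sub_right, ← adjMap_apply_s13, ← adjMap_apply_s13, h, sub_self]
  exact sub_eq_zero.1 (inner_self_eq_zero.1 (Submodule.inner_right_of_mem_orthogonal hmem hperp))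

variable {Q : V →ₗ[ℂ] K} {P : V →ₗ[ℂ] W} {t t' : K} {s s' : W}

/-- When `‖Q v‖ = ‖P v‖` for all `v`, the map `Q v ↦ P v` extends to an isometry
`closure (range Q) → closure (range P)`; `Corresponds Q P t s` says that it sends `t` to `s`. -/
structure Corresponds (Q : V →ₗ[ℂ] K) (P : V →ₗ[ℂ] W) (t : K) (s : W) : Prop where
  mem_left : t ∈ closure (range Q)
  mem_right : s ∈ closure (range P)
  adjMap_eq : adjMap Q t = adjMap P s

namespace Corresponds

lemma add (h : Corresponds Q P t s) (h' : Corresponds Q P t' s') :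
    Corresponds Q P (t + t') (s + s') where
  mem_left := LinearMap.mem_topologicalClosure_range_iff.1 <| add_mem
    (LinearMap.mem_topologicalClosure_range_iff.2 h.mem_left)
    (LinearMap.mem_topologicalClosure_range_iff.2 h'.mem_left)
  mem_right := LinearMap.mem_topologicalClosure_range_iff.1 <| add_mem
    (LinearMap.mem_topologicalClosure_range_iff.2 h.mem_right)
    (LinearMap.mem_topologicalClosure_range_iff.2 h'.mem_right)
  adjMap_eq := by rw [map_add, map_add, h.adjMap_eq, h'.adjMap_eq]

lemma smul (h : Corresponds Q P t s) (c : ℂ) : Corresponds Q P (c • t) (c • s) where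
  mem_left := LinearMap.mem_topologicalClosure_range_iff.1 <|
    Submodule.smul_mem _ c (LinearMap.mem_topologicalClosure_range_iff.2 h.mem_left)
  mem_right := LinearMap.mem_topologicalClosure_range_iff.1 <|
    Submodule.smul_mem _ c (LinearMap.mem_topologicalClosure_range_iff.2 h.mem_right)
  adjMap_eq := by rw [map_smul, map_smul, h.adjMap_eq]

lemma sub (h : Corresponds Q P t s) (h' : Corresponds Q P t' s') :
    Corresponds Q P (t - t') (s - s') := by
  simpa only [sub_eq_add_neg, neg_one_smul] using h.add (h'.smul (-1))

lemma norm_eq (hQP : ∀ v, ‖Q v‖ = ‖P v‖) (h : Corresponds Q P t s) : ‖t‖ = ‖s‖ := by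
  have hre : ∀ v, RCLike.re ⟪t, Q v⟫_ℂ = RCLike.re ⟪s, P v⟫_ℂ := fun v => by
    rw [← inner_conj_symm, ← adjMap_apply_s13, h.adjMap_eq, adjMap_apply_s13, inner_conj_symm]
  have hdiff : ∀ v, ‖t - Q v‖ ^ 2 = ‖s - P v‖ ^ 2 + (‖t‖ ^ 2 - ‖s‖ ^ 2) := fun v => by
    rw [@norm_sub_sq ℂ, @norm_sub_sq ℂ, hre, hQP]
    ring
  have hle : ‖t‖ ^ 2 - ‖s‖ ^ 2 ≤ 0 :=
    nonpos_of_forall_le_norm_sub_sq h.mem_left fun v => by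
      nlinarith [hdiff v, sq_nonneg ‖s - P v‖]
  have hge : ‖s‖ ^ 2 - ‖t‖ ^ 2 ≤ 0 :=
    nonpos_of_forall_le_norm_sub_sq h.mem_right fun v => by
      nlinarith [hdiff v, sq_nonneg ‖t - Q v‖]
  exact (sq_eq_sq₀ (norm_nonneg _) (norm_nonneg _)).1 (by linarith)

lemma inner_eq (hQP : ∀ v, ‖Q v‖ = ‖P v‖) (h : Corresponds Q P t s)
    (h' : Corresponds Q P t' s') : ⟪t', t⟫_ℂ = ⟪s', s⟫_ℂ := by
  rw [inner_eq_sum_norm_sq_div_four, inner_eq_sum_norm_sq_div_four,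
    (h'.add h).norm_eq hQP, (h'.sub h).norm_eq hQP,
    (h'.sub (h.smul _)).norm_eq hQP, (h'.add (h.smul _)).norm_eq hQP]

end Corresponds

end AdjMap

section UpperTriangular

variable {X Y H G : Type*} [AddCommGroup X] [Module ℂ X] [AddCommGroup Y] [Module ℂ Y]
  [NormedAddCommGroup H] [InnerProductSpace ℂ H] [NormedAddCommGroup G] [InnerProductSpace ℂ G]

def upperTriangular (R : X →ₗ[ℂ] H) (T : Y →ₗ[ℂ] H) (S : Y →ₗ[ℂ] G) :
    X × Y →ₗ[ℂ] WithLp 2 (H × G) :=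
  (WithLp.linearEquiv 2 ℂ (H × G)).symm.toLinearMap ∘ₗ
    (R.coprod T).prod (S ∘ₗ LinearMap.snd ℂ X Y)

@[simp]
lemma upperTriangular_apply (R : X →ₗ[ℂ] H) (T : Y →ₗ[ℂ] H) (S : Y →ₗ[ℂ] G) (x : X) (y : Y) :
    upperTriangular R T S (x, y) = WithLp.toLp 2 (R x + T y, S y) := rfl

lemma toLp_mem_closure_range_upperTriangular {R : X →ₗ[ℂ] H} {T : Y →ₗ[ℂ] H}
    {S : Y →ₗ[ℂ] G} (hT : ∀ y, T y ∈ closure (range R)) {h : H} {g : G}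
    (hh : h ∈ closure (range R)) (hg : g ∈ closure (range S)) :
    WithLp.toLp 2 (h, g) ∈ closure (range (upperTriangular R T S)) := by
  set M := (LinearMap.range (upperTriangular R T S)).topologicalClosure
  have hM : (M : Set (WithLp 2 (H × G))) = closure (range (upperTriangular R T S)) := by
    rw [Submodule.topologicalClosure_coe, LinearMap.coe_range]
  have hleft : ∀ u ∈ closure (range R), WithLp.toLp 2 (u, (0 : G)) ∈ M := fun u hu => by
    rw [← SetLike.mem_coe, hM]
    refine map_mem_closure (f := fun u => WithLp.toLp 2 (u, (0 : G))) (by fun_prop) hu ?_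
    rintro _ ⟨x, rfl⟩
    exact ⟨(x, 0), by simp⟩
  have hright : WithLp.toLp 2 ((0 : H), g) ∈ M := by
    rw [← SetLike.mem_coe, ← (Submodule.isClosed_topologicalClosure _).closure_eq]
    refine map_mem_closure (f := fun g => WithLp.toLp 2 ((0 : H), g)) (by fun_prop) hg ?_
    rintro _ ⟨y, rfl⟩
    have hy : WithLp.toLp 2 ((0 : H), S y) =
        upperTriangular R T S (0, y) - WithLp.toLp 2 (T y, 0) := by
      simp [← WithLp.toLp_sub]
    change WithLp.toLp 2 ((0 : H), S y) ∈ M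
    rw [hy]
    exact sub_mem (Submodule.le_topologicalClosure _ ⟨(0, y), rfl⟩) (hleft _ (hT y))
  have hsum :
      WithLp.toLp 2 (h, g) = WithLp.toLp 2 (h, (0 : G)) + WithLp.toLp 2 ((0 : H), g) := by
    simp [← WithLp.toLp_add]
  rw [← hM, SetLike.mem_coe, hsum]
  exact add_mem (hleft h hh) hright

end UpperTriangular

lemma norm_eq_norm_upperTriangular {X Y H G K : Type*} [AddCommGroup X] [Module ℂ X]
    [AddCommGroup Y] [Module ℂ Y] [NormedAddCommGroup H] [InnerProductSpace ℂ H]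
    [NormedAddCommGroup G] [InnerProductSpace ℂ G] [NormedAddCommGroup K] [InnerProductSpace ℂ K]
    {A : X →ₗ[ℂ] (X →ₗ⋆[ℂ] ℂ)} {B : Y →ₗ[ℂ] (X →ₗ⋆[ℂ] ℂ)} {D : Y →ₗ[ℂ] (Y →ₗ⋆[ℂ] ℂ)}
    {R : X →ₗ[ℂ] H} {TB : Y →ₗ[ℂ] H} {S : Y →ₗ[ℂ] G} {Q : (X × Y) →ₗ[ℂ] K}
    (hR : ∀ x, A x = adjMap R (R x)) (hTB : ∀ y, adjMap R (TB y) = B y)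
    (hS : ∀ y, D y - adjMap TB (TB y) = adjMap S (S y))
    (hQ : ∀ x y, (A x + B y) x + ((Btilde B) x + D y) y = ⟪Q (x, y), Q (x, y)⟫_ℂ)
    (p : X × Y) : ‖Q p‖ = ‖upperTriangular R TB S p‖ := by
  obtain ⟨x, y⟩ := p
  have hD : D y y = ⟪TB y, TB y⟫_ℂ + ⟪S y, S y⟫_ℂ := by
    have h := congrArg (· y) (hS y)
    simp only [LinearMap.sub_apply, adjMap_apply_s13] at h
    linear_combination h
  have hinner : ⟪Q (x, y), Q (x, y)⟫_ℂ =
      ⟪upperTriangular R TB S (x, y), upperTriangular R TB S (x, y)⟫_ℂ := by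
    simp only [← hQ, LinearMap.add_apply, Btilde_apply, hR, ← hTB, adjMap_apply_s13, hD,
      upperTriangular_apply, WithLp.prod_inner_apply, inner_add_left, inner_add_right,
      inner_conj_symm]
    ring
  rw [← sq_eq_sq₀ (norm_nonneg _) (norm_nonneg _), @norm_sq_eq_re_inner ℂ,
    @norm_sq_eq_re_inner ℂ, hinner]

theorem schur_stmt13_general {X Y Z H G K : Type} [AddCommGroup X] [Module ℂ X]
    [AddCommGroup Y] [Module ℂ Y] [AddCommGroup Z] [Module ℂ Z]
    [NormedAddCommGroup H] [InnerProductSpace ℂ H]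
    [NormedAddCommGroup G] [InnerProductSpace ℂ G]
    [NormedAddCommGroup K] [InnerProductSpace ℂ K]
    (A : X →ₗ[ℂ] (X →ₗ⋆[ℂ] ℂ)) (B : Y →ₗ[ℂ] (X →ₗ⋆[ℂ] ℂ))
    (BX : Z →ₗ[ℂ] (X →ₗ⋆[ℂ] ℂ))
    (D : Y →ₗ[ℂ] (Y →ₗ⋆[ℂ] ℂ)) (BY : Z →ₗ[ℂ] (Y →ₗ⋆[ℂ] ℂ))
    (D₁ : Z →ₗ[ℂ] (Z →ₗ⋆[ℂ] ℂ))
    -- (R, H): square root of A; T_B, E the associated operators for B, B_X: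
    (R : X →ₗ[ℂ] H) (hR : ∀ x, A x = adjMap R (R x))
    (TB : Y →ₗ[ℂ] H) (hTB : ∀ y, adjMap R (TB y) = B y)
    (hTBran : ∀ y, TB y ∈ closure (Set.range R))
    (E : Z →ₗ[ℂ] H) (hE : ∀ z, adjMap R (E z) = BX z)
    (hEran : ∀ z, E z ∈ closure (Set.range R))
    -- F : the operator associated with the combined off-diagonal block (B, B_X):
    (F : (Y × Z) →ₗ[ℂ] H)
    (hF : ∀ (y : Y) (z : Z), adjMap R (F (y, z)) = B y + BX z)
    (hFran : ∀ w : Y × Z, F w ∈ closure (Set.range R))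
    -- (S, G): square root of 𝐀/A = D − T_B* T_B:
    (S : Y →ₗ[ℂ] G) (hS : ∀ y, D y - adjMap TB (TB y) = adjMap S (S y))
    -- T₂ : operator associated with the off-diagonal block of 𝐃/A w.r.t. 𝐀/A:
    (T₂ : Z →ₗ[ℂ] G)
    (hT₂ : ∀ (z : Z) (y' : Y),
      (adjMap S (T₂ z)) y' = BY z y' - @inner ℂ _ _ (F (y', 0)) (F (0, z)))
    (hT₂ran : ∀ z, T₂ z ∈ closure (Set.range S))
    -- (Q, K): square root of 𝐀 = [[A, B], [B~, D]]:
    (Q : (X × Y) →ₗ[ℂ] K)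
    (hQ : ∀ (x : X) (y : Y) (x' : X) (y' : Y),
      (A x + B y) x' + ((Btilde B) x + D y) y' = @inner ℂ _ _ (Q (x', y')) (Q (x, y)))
    -- T₃ : operator associated with the off-diagonal block (B_X; B_Y) w.r.t. 𝐀:
    (T₃ : Z →ₗ[ℂ] K)
    (hT₃ : ∀ (z : Z) (x' : X) (y' : Y),
      @inner ℂ _ _ (Q (x', y')) (T₃ z) = BX z x' + BY z y')
    (hT₃ran : ∀ z, T₃ z ∈ closure (Set.range Q)) :
    -- 𝐀/A is the left upper corner of 𝐃/A:
    (∀ (y y' : Y),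
        D y y' - @inner ℂ _ _ (F (y', 0)) (F (y, 0)) =
          (D y - adjMap TB (TB y)) y') ∧
      -- the quotient formula (𝐃/A)/(𝐀/A) = 𝐃/𝐀:
      ∀ (z z' : Z),
        D₁ z z' - @inner ℂ _ _ (F (0, z')) (F (0, z)) -
            @inner ℂ _ _ (T₂ z') (T₂ z) =
          D₁ z z' - @inner ℂ _ _ (T₃ z') (T₃ z) := by
  have hF₁ : ∀ y, F (y, 0) = TB y := fun y =>
    eq_of_adjMap_eq (hFran _) (hTBran y) (by rw [hF, hTB, map_zero, add_zero])
  have hF₂ : ∀ z, F (0, z) = E z := fun z =>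
    eq_of_adjMap_eq (hFran _) (hEran z) (by rw [hF, hE, map_zero, zero_add])
  have hnorm := norm_eq_norm_upperTriangular hR hTB hS fun x y => hQ x y x y
  have hT₃corr : ∀ z,
      Corresponds Q (upperTriangular R TB S) (T₃ z) (WithLp.toLp 2 (E z, T₂ z)) := fun z =>
    { mem_left := hT₃ran z
      mem_right := toLp_mem_closure_range_upperTriangular hTBran (hEran z) (hT₂ran z)
      adjMap_eq := by
        ext ⟨x, y⟩
        have hT₂z := hT₂ z y
        simp only [adjMap_apply_s13, hF₁, hF₂] at hT₂z
        simp only [adjMap_apply_s13, hT₃, upperTriangular_apply, WithLp.prod_inner_apply,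
          inner_add_left, hT₂z, ← hE]
        ring }
  refine ⟨fun y y' => by simp [hF₁], fun z z' => ?_⟩
  rw [hF₂, hF₂, (hT₃corr z).inner_eq hnorm (hT₃corr z')]
  simp only [WithLp.prod_inner_apply]
  ring

theorem schur_stmt13 {X Y Z H G K : Type} [AddCommGroup X] [Module ℂ X]
    [AddCommGroup Y] [Module ℂ Y] [AddCommGroup Z] [Module ℂ Z]
    [NormedAddCommGroup H] [InnerProductSpace ℂ H] [CompleteSpace H]
    [NormedAddCommGroup G] [InnerProductSpace ℂ G] [CompleteSpace G]
    [NormedAddCommGroup K] [InnerProductSpace ℂ K] [CompleteSpace K]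
    (A : X →ₗ[ℂ] (X →ₗ⋆[ℂ] ℂ)) (B : Y →ₗ[ℂ] (X →ₗ⋆[ℂ] ℂ))
    (BX : Z →ₗ[ℂ] (X →ₗ⋆[ℂ] ℂ))
    (D : Y →ₗ[ℂ] (Y →ₗ⋆[ℂ] ℂ)) (BY : Z →ₗ[ℂ] (Y →ₗ⋆[ℂ] ℂ))
    (D₁ : Z →ₗ[ℂ] (Z →ₗ⋆[ℂ] ℂ))
    (hDh : ∀ y₁ y₂, D y₁ y₂ = conj (D y₂ y₁))
    (hD₁h : ∀ z₁ z₂, D₁ z₁ z₂ = conj (D₁ z₂ z₁))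
    -- 𝐃 is non-negative:
    (hDDnonneg : ∀ (x : X) (y : Y) (z : Z),
      0 ≤ (A x + B y + BX z) x + ((Btilde B) x + D y + BY z) y +
        ((Btilde BX) x + (Btilde BY) y + D₁ z) z)
    -- (R, H): square root of A; T_B, E the associated operators for B, B_X:
    (R : X →ₗ[ℂ] H) (hR : ∀ x, A x = adjMap R (R x))
    (TB : Y →ₗ[ℂ] H) (hTB : ∀ y, adjMap R (TB y) = B y)
    (hTBran : ∀ y, TB y ∈ closure (Set.range R))
    (E : Z →ₗ[ℂ] H) (hE : ∀ z, adjMap R (E z) = BX z)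
    (hEran : ∀ z, E z ∈ closure (Set.range R))
    -- F : the operator associated with the combined off-diagonal block (B, B_X):
    (F : (Y × Z) →ₗ[ℂ] H)
    (hF : ∀ (y : Y) (z : Z), adjMap R (F (y, z)) = B y + BX z)
    (hFran : ∀ w : Y × Z, F w ∈ closure (Set.range R))
    -- (S, G): square root of 𝐀/A = D − T_B* T_B:
    (S : Y →ₗ[ℂ] G) (hS : ∀ y, D y - adjMap TB (TB y) = adjMap S (S y))
    -- T₂ : operator associated with the off-diagonal block of 𝐃/A w.r.t. 𝐀/A:
    (T₂ : Z →ₗ[ℂ] G)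
    (hT₂ : ∀ (z : Z) (y' : Y),
      (adjMap S (T₂ z)) y' = BY z y' - @inner ℂ _ _ (F (y', 0)) (F (0, z)))
    (hT₂ran : ∀ z, T₂ z ∈ closure (Set.range S))
    -- (Q, K): square root of 𝐀 = [[A, B], [B~, D]]:
    (Q : (X × Y) →ₗ[ℂ] K)
    (hQ : ∀ (x : X) (y : Y) (x' : X) (y' : Y),
      (A x + B y) x' + ((Btilde B) x + D y) y' = @inner ℂ _ _ (Q (x', y')) (Q (x, y)))
    -- T₃ : operator associated with the off-diagonal block (B_X; B_Y) w.r.t. 𝐀: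
    (T₃ : Z →ₗ[ℂ] K)
    (hT₃ : ∀ (z : Z) (x' : X) (y' : Y),
      @inner ℂ _ _ (Q (x', y')) (T₃ z) = BX z x' + BY z y')
    (hT₃ran : ∀ z, T₃ z ∈ closure (Set.range Q)) :
    -- 𝐀/A is the left upper corner of 𝐃/A:
    (∀ (y y' : Y),
        D y y' - @inner ℂ _ _ (F (y', 0)) (F (y, 0)) =
          (D y - adjMap TB (TB y)) y') ∧
      -- the quotient formula (𝐃/A)/(𝐀/A) = 𝐃/𝐀:
      ∀ (z z' : Z),
        D₁ z z' - @inner ℂ _ _ (F (0, z')) (F (0, z)) -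
            @inner ℂ _ _ (T₂ z') (T₂ z) =
          D₁ z z' - @inner ℂ _ _ (T₃ z') (T₃ z) :=
  schur_stmt13_general A B BX D BY D₁ R hR TB hTB hTBran E hE hEran F hF hFran S hS T₂ hT₂ hT₂ran Q
    hQ T₃ hT₃ hT₃ran
end
end
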